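/- arXiv:1009.3991 — 3 statements merged into one kernel-verified Lean document; each statement's English description precedes it below -/
import Mathlib

section
/- Let d ≥ 1, let F_q be a finite field of odd characteristic with q elements, and let t ∈ F_q \ {0}. Then the sphere S_t = {x ∈ F_q^d : ‖x‖ = t} satisfies | |S_t| − q^{d−1} | ≤ q^{(d−1)/2}. -/
/-!
Fix a primitive additive character `ψ` of `F`; write `χ` for the quadratic character and `g`
for its Gauss sum. Detecting `‖x‖ = t` by orthogonality of `ψ`, the sum over `x` factors into
`d` copies of `∑ u, ψ (a u²)`, which is `χ(a) g` for `a ≠ 0` since `u ↦ u²` is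
`(1 + χ(s))`-to-one onto `s`. Hence `q |S_t| = q^d + g^d G`, where `G` is the Gauss sum of
`χ^d` (trivial or quadratic) against `ψ(-t ·)`. As `|g| = √q` and `|G| ≤ √q`, the error is
at most `q^{(d+1)/2}`.
-/

open Finset AddChar MulChar

def normF {F : Type*} [Field F] {d : ℕ} (x : Fin d → F) : F := ∑ i, x i ^ 2

lemma AddChar.map_sum_eq_prod {A M ι : Type*} [AddCommMonoid A] [CommMonoid M] (ψ : AddChar A M)
    (s : Finset ι) (f : ι → A) : ψ (∑ i ∈ s, f i) = ∏ i ∈ s, ψ (f i) := by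
  classical
  induction s using Finset.induction with
  | empty => simp
  | insert _ _ h ih => rw [sum_insert h, prod_insert h, map_add_eq_mul, ih]

section QuadraticCharSums

variable {F R : Type*} [Field F] [Fintype F] [CommRing R]

local notation "χ" => MulChar.ringHomComp (quadraticChar F) (Int.castRingHom R)

lemma card_filter_sq_eq_quadraticChar_add_one [DecidableEq F] (hF : ringChar F ≠ 2)
    (s : F) :
    (#{u : F | u ^ 2 = s} : R) = χ s + 1 := by
  have := congrArg (Int.cast : ℤ → R) (quadraticChar_card_sqrts hF s)
  push_cast [Set.toFinset_ofPred] at this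
  exact this

lemma sum_addChar_mul_normF (ψ : AddChar F R) (d : ℕ) (a : F) :
    ∑ x : Fin d → F, ψ (a * normF x) = (∑ u, ψ (a * u ^ 2)) ^ d := by
  classical
  simp_rw [normF, mul_sum, map_sum_eq_prod]
  rw [← Fintype.prod_sum (fun _ u ↦ ψ (a * u ^ 2)), prod_const, card_fin]

variable [IsDomain R] {ψ : AddChar F R}

lemma card_mul_card_filter_eq_sum_addChar [DecidableEq F] (hψ : ψ.IsPrimitive) {X : Type*}
    [Fintype X] (f : X → F) (t : F) :
    (Fintype.card F : R) * #{x | f x = t} = ∑ a, ∑ x, ψ (a * (f x - t)) := by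
  rw [sum_comm]
  simp [sum_mulShift _ hψ, sub_eq_zero, sum_ite, mul_comm]

lemma sum_addChar_mul_sq [DecidableEq F] (hF : ringChar F ≠ 2) (hψ : ψ.IsPrimitive) {a : F}
    (ha : a ≠ 0) :
    ∑ u, ψ (a * u ^ 2) = χ a * gaussSum χ ψ := by
  lift a to Fˣ using ha.isUnit
  calc ∑ u, ψ (a * u ^ 2) = ∑ s, (#{u : F | u ^ 2 = s} : R) * ψ (a * s) := by
        rw [← sum_fiberwise univ (· ^ 2)]
        refine sum_congr rfl fun s _ ↦ ?_
        rw [sum_congr rfl fun u hu ↦ by rw [(mem_filter.mp hu).2], sum_const, nsmul_eq_mul]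
    _ = gaussSum χ (ψ.mulShift a) + ∑ s, ψ (s * a) := by
        simp [card_filter_sq_eq_quadraticChar_add_one hF, add_mul, sum_add_distrib, gaussSum,
          mulShift_apply, mul_comm]
    _ = χ a * gaussSum χ ψ := by
        rw [sum_mulShift (a : F) hψ, if_neg ha, Nat.cast_zero, add_zero, gaussSum_mulShift_eq,
          ((quadraticChar_isQuadratic F).comp _).inv]

theorem card_mul_card_sphere [DecidableEq F] (hF : ringChar F ≠ 2) (hψ : ψ.IsPrimitive)
    (d : ℕ) (t : F) :
    (Fintype.card F : R) * #{x : Fin d → F | normF x = t} =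
      Fintype.card F ^ d + gaussSum χ ψ ^ d * gaussSum (χ ^ d) (ψ.mulShift (-t)) := by
  have inner (a : F) : ∑ x : Fin d → F, ψ (a * (normF x - t)) =
      (if a = 0 then (Fintype.card F : R) ^ d else 0) +
        gaussSum χ ψ ^ d * ((χ ^ d) a * ψ (-t * a)) := by
    simp_rw [mul_sub, sub_eq_add_neg, map_add_eq_mul, ← sum_mul, sum_addChar_mul_normF]
    rcases eq_or_ne a 0 with rfl | ha
    · simp
    · rw [sum_addChar_mul_sq hF hψ ha, if_neg ha, zero_add, mul_pow]
      lift a to Fˣ using ha.isUnit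
      rw [pow_apply_coe]
      ring_nf
  rw [card_mul_card_filter_eq_sum_addChar hψ, sum_congr rfl fun a _ ↦ inner a, sum_add_distrib,
    sum_ite_eq', if_pos (mem_univ _), ← mul_sum]
  simp [gaussSum, mulShift_apply]

end QuadraticCharSums

section ComplexGaussSums

variable {F : Type*} [Field F] [Fintype F] {ψ : AddChar F ℂ}

lemma norm_gaussSum_eq_sqrt_card {χ : MulChar F ℂ} (hχ : χ ≠ 1) (hψ : ψ.IsPrimitive) :
    ‖gaussSum χ ψ‖ = √(Fintype.card F) := by
  have h : ‖gaussSum χ ψ‖ ^ 2 = Fintype.card F := by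
    exact_mod_cast show (‖gaussSum χ ψ‖ ^ 2 : ℂ) = Fintype.card F by
      rw [← Complex.mul_conj', ← Complex.star_def, star_gaussSum_eq,
        gaussSum_mul_gaussSum_eq_card hχ hψ]
  rw [← h, Real.sqrt_sq (norm_nonneg _)]

lemma norm_gaussSum_le_sqrt_card (χ : MulChar F ℂ) (hψ : ψ.IsPrimitive) :
    ‖gaussSum χ ψ‖ ≤ √(Fintype.card F) := by
  rcases eq_or_ne χ 1 with rfl | hχ
  · have hψ1 : ψ ≠ 1 := by simpa using hψ one_ne_zero
    rw [gaussSum_one_left hψ1, norm_neg, norm_one]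
    exact Real.one_le_sqrt.mpr (Nat.one_le_cast.mpr Fintype.card_pos)
  · exact (norm_gaussSum_eq_sqrt_card hχ hψ).le

end ComplexGaussSums

lemma abs_sub_pow_pred_le {q N : ℝ} (hq : 0 < q) {d : ℕ} (hd : 1 ≤ d)
    (h : |q * N - q ^ d| ≤ √q ^ (d + 1)) : |N - q ^ (d - 1)| ≤ q ^ (((d : ℝ) - 1) / 2) := by
  obtain ⟨k, rfl⟩ : ∃ k, d = k + 1 := ⟨d - 1, by omega⟩
  have hsqrt : √q ^ (k + 1 + 1) = q * q ^ (((↑(k + 1) : ℝ) - 1) / 2) := by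
    rw [Real.sqrt_eq_rpow, ← Real.rpow_natCast, ← Real.rpow_mul hq.le,
      show ((↑(k + 1) : ℝ) - 1) / 2 = 1 / 2 * ↑(k + 1 + 1) - 1 by push_cast; ring,
      Real.rpow_sub hq, Real.rpow_one]
    field_simp
  rw [show q * N - q ^ (k + 1) = q * (N - q ^ (k + 1 - 1)) by simp; ring, abs_mul,
    abs_of_pos hq, hsqrt] at h
  exact le_of_mul_le_mul_left h hq

/-- For `t ≠ 0`, the sphere `S_t = {x ∈ F_q^d : ‖x‖ = t}` has `| |S_t| - q^{d-1} | ≤ q^{(d-1)/2}`. -/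
theorem stmt8 (d : ℕ) (hd : 1 ≤ d) (F : Type*) [Field F] [Fintype F]
    (hF : ringChar F ≠ 2) (t : F) (ht : t ≠ 0) :
    |(Set.ncard {x : Fin d → F | normF x = t} : ℝ) - (Fintype.card F : ℝ) ^ (d - 1)| ≤
      (Fintype.card F : ℝ) ^ (((d : ℝ) - 1) / 2) := by
  classical
  set ψ := FiniteField.primitiveChar_to_Complex F
  have hψ : ψ.IsPrimitive := FiniteField.primitiveChar_to_Complex_isPrimitive F
  have hψt : (ψ.mulShift (-t)).IsPrimitive := IsPrimitive.of_ne_one (hψ (neg_ne_zero.mpr ht))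
  set χ := (quadraticChar F).ringHomComp (Int.castRingHom ℂ)
  have hχ : χ ≠ 1 :=
    (ringHomComp_ne_one_iff (RingHom.injective_int _)).mpr (quadraticChar_ne_one hF)
  have hsphere : {x : Fin d → F | normF x = t}.ncard = #{x : Fin d → F | normF x = t} := by
    rw [← Set.ncard_coe_finset]; simp
  have hdev : |(Fintype.card F : ℝ) * #{x : Fin d → F | normF x = t} - Fintype.card F ^ d| ≤
      √(Fintype.card F) ^ (d + 1) := by
    have hcount := card_mul_card_sphere (R := ℂ) hF hψ d t
    rw [← Real.norm_eq_abs, ← Complex.norm_real]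
    push_cast
    rw [hcount, add_sub_cancel_left, norm_mul, norm_pow, norm_gaussSum_eq_sqrt_card hχ hψ,
      pow_succ]
    gcongr
    exact norm_gaussSum_le_sqrt_card _ hψt
  rw [hsphere]
  exact abs_sub_pow_pred_le (Nat.cast_pos.mpr Fintype.card_pos) hd hdev
end

section
/- Let F_q be a finite field of odd characteristic, let d ≥ 1, and let z, w ∈ F_q^d with ‖z‖ = ‖w‖ ≠ 0. Then there exists a d×d matrix O over F_q with OᵀO = I such that O·z = w. Consequently, the orbit of any vector z with ‖z‖ ≠ 0 under the orthogonal group O_d(F_q) is the entire sphere S_{‖z‖} = {x ∈ F_q^d : ‖x‖ = ‖z‖}. -/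
open Matrix

section aux

variable {F : Type*} [Field F] {d : ℕ}

lemma normF_eq_dot (x : Fin d → F) : normF x = x ⬝ᵥ x := by
  simp [normF, dotProduct, sq]

/-- Reflection matrix in the hyperplane orthogonal to `u`. -/
noncomputable def reflM (u : Fin d → F) : Matrix (Fin d) (Fin d) F :=
  1 - (2 / normF u) • Matrix.vecMulVec u u

lemma vecMulVec_mul_vecMulVec (u : Fin d → F) :
    Matrix.vecMulVec u u * Matrix.vecMulVec u u = normF u • Matrix.vecMulVec u u := by
  ext i j
  simp only [Matrix.mul_apply, Matrix.vecMulVec_apply, Matrix.smul_apply, smul_eq_mul,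
    normF, Finset.sum_mul]
  exact Finset.sum_congr rfl fun k _ => by ring

lemma reflM_transpose (u : Fin d → F) : (reflM u).transpose = reflM u := by
  ext i j
  by_cases h : i = j <;>
    simp [reflM, Matrix.one_apply, Matrix.vecMulVec_apply, h, eq_comm, mul_comm]

lemma reflM_mul_self (u : Fin d → F) (hu : normF u ≠ 0) : reflM u * reflM u = 1 := by
  have h := vecMulVec_mul_vecMulVec u
  have hc : 2 / normF u * (2 / normF u * normF u) = 2 / normF u + 2 / normF u := by
    field_simp; ring
  simp only [reflM, Matrix.sub_mul, Matrix.mul_sub, Matrix.one_mul, Matrix.mul_one,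
    Matrix.smul_mul, Matrix.mul_smul, smul_sub, smul_smul, h]
  rw [hc, add_smul]
  abel

lemma reflM_mulVec (u x : Fin d → F) :
    (reflM u).mulVec x = x - (2 / normF u * (u ⬝ᵥ x)) • u := by
  have hv : (Matrix.vecMulVec u u).mulVec x = (u ⬝ᵥ x) • u := by
    ext i
    simp only [Matrix.mulVec, dotProduct, Matrix.vecMulVec_apply, Pi.smul_apply,
      smul_eq_mul, Finset.sum_mul]
    exact Finset.sum_congr rfl fun k _ => by ring
  rw [reflM, Matrix.sub_mulVec, Matrix.one_mulVec, Matrix.smul_mulVec, hv, smul_smul]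

lemma orth_preserves (O : Matrix (Fin d) (Fin d) F) (h : O.transpose * O = 1) (x : Fin d → F) :
    normF (O.mulVec x) = normF x := by
  rw [normF_eq_dot, normF_eq_dot, Matrix.dotProduct_mulVec, ← Matrix.mulVec_transpose,
    Matrix.mulVec_mulVec, h, Matrix.one_mulVec]

lemma exists_orth (hF : (2 : F) ≠ 0) (z w : Fin d → F) (hzw : normF z = normF w)
    (hz : normF z ≠ 0) :
    ∃ O : Matrix (Fin d) (Fin d) F, O.transpose * O = 1 ∧ O.mulVec z = w := by
  have key : normF (z - w) + normF (z + w) = 4 * normF z := by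
    have h1 : normF (z - w) + normF (z + w) = 2 * normF z + 2 * normF w := by
      simp only [normF, Pi.sub_apply, Pi.add_apply, Finset.mul_sum, ← Finset.sum_add_distrib]
      exact Finset.sum_congr rfl fun i _ => by ring
    rw [h1, ← hzw]; ring
  have h4 : (4 : F) * normF z ≠ 0 := by
    apply mul_ne_zero _ hz
    have h44 : (4:F) = 2 * 2 := by norm_num
    rw [h44]; exact mul_ne_zero hF hF
  have hzw' : z ⬝ᵥ z = w ⬝ᵥ w := by rw [← normF_eq_dot, ← normF_eq_dot, hzw]
  have hsym : w ⬝ᵥ z = z ⬝ᵥ w := dotProduct_comm w z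
  by_cases hmin : normF (z - w) ≠ 0
  · refine ⟨reflM (z - w), ?_, ?_⟩
    · rw [reflM_transpose]; exact reflM_mul_self _ hmin
    · rw [reflM_mulVec]
      have hdot : 2 * ((z - w) ⬝ᵥ z) = normF (z - w) := by
        rw [normF_eq_dot]
        simp only [sub_dotProduct, dotProduct_sub, hzw', hsym]
        ring
      have hc : 2 / normF (z - w) * ((z - w) ⬝ᵥ z) = 1 := by
        rw [show 2 / normF (z-w) * ((z - w) ⬝ᵥ z) = 2 * ((z - w) ⬝ᵥ z) / normF (z-w) by ring,
          hdot, div_self hmin]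
      rw [hc, one_smul, sub_sub_cancel]
  · push_neg at hmin
    have hplus : normF (z + w) ≠ 0 := by
      intro h0
      rw [hmin, h0, zero_add] at key
      exact h4 key.symm
    refine ⟨-reflM (z + w), ?_, ?_⟩
    · rw [Matrix.transpose_neg, reflM_transpose, neg_mul_neg]
      exact reflM_mul_self _ hplus
    · rw [Matrix.neg_mulVec, reflM_mulVec]
      have hdot : 2 * ((z + w) ⬝ᵥ z) = normF (z + w) := by
        rw [normF_eq_dot]
        simp only [add_dotProduct, dotProduct_add, hzw', hsym]
        ring
      have hc : 2 / normF (z + w) * ((z + w) ⬝ᵥ z) = 1 := by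
        rw [show 2 / normF (z+w) * ((z + w) ⬝ᵥ z) = 2 * ((z + w) ⬝ᵥ z) / normF (z+w) by ring,
          hdot, div_self hplus]
      rw [hc, one_smul]
      abel

end aux

/-- Witt-type theorem: if `‖z‖ = ‖w‖ ≠ 0` then some orthogonal matrix maps `z` to `w`;
consequently the orbit of `z` under the orthogonal group is the whole sphere `S_{‖z‖}`. -/
theorem stmt13 (F : Type*) [Field F] [Fintype F] (hF : ringChar F ≠ 2)
    (d : ℕ) (hd : 1 ≤ d) (z w : Fin d → F) (hzw : normF z = normF w) (hz : normF z ≠ 0) :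
    (∃ O : Matrix (Fin d) (Fin d) F, O.transpose * O = 1 ∧ O.mulVec z = w) ∧
      {x : Fin d → F | ∃ O : Matrix (Fin d) (Fin d) F, O.transpose * O = 1 ∧ O.mulVec z = x} =
        {x : Fin d → F | normF x = normF z} := by
  have h2 : (2 : F) ≠ 0 := Ring.two_ne_zero hF
  constructor
  · exact exists_orth h2 z w hzw hz
  · ext x
    simp only [Set.mem_setOf_eq]
    constructor
    · rintro ⟨O, hO, rfl⟩
      exact orth_preserves O hO z
    · intro hx
      exact exists_orth h2 z x hx.symm hz
end

section
/- Let F_q be a finite field of odd characteristic, let d ≥ 2, let a, b ∈ F_q^d with a ≠ b, let r ∈ F_q \ {0}, and let s ∈ F_q. Then |{x ∈ F_q^d : ‖x − a‖ = r and ‖x − b‖ = s}| ≤ 2·q^{d−2}. -/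
open Finset Polynomial in

lemma two_var_count {F : Type*} [Field F] (c₁ c₂ u r' : F)
    (h2F : (2 : F) ≠ 0) (h1 : c₁ ≠ 0) (h2 : c₁ ^ 2 + c₂ ^ 2 ≠ 0 ∨ r' ≠ 0) :
    Set.ncard {p : F × F | c₁ * p.1 + c₂ * p.2 = u ∧ p.1 ^ 2 + p.2 ^ 2 = r'} ≤ 2 := by
  classical
  set P : F[X] := C (c₁ ^ 2 + c₂ ^ 2) * X ^ 2 + C (-(2 * u * c₂)) * X + C (u ^ 2 - c₁ ^ 2 * r')
    with hP
  have hc2 : P.coeff 2 = c₁ ^ 2 + c₂ ^ 2 := by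
    simp only [hP, coeff_add, coeff_C_mul, coeff_X_pow, coeff_C, coeff_X]; norm_num
  have hc1 : P.coeff 1 = -(2 * u * c₂) := by
    simp only [hP, coeff_add, coeff_C_mul, coeff_X_pow, coeff_C, coeff_X]; norm_num
  have hc0 : P.coeff 0 = u ^ 2 - c₁ ^ 2 * r' := by
    simp only [hP, coeff_add, coeff_C_mul, coeff_X_pow, coeff_C, coeff_X]; norm_num
  have hPne : P ≠ 0 := by
    intro h0
    rcases h2 with h2 | h2
    · exact h2 (by rw [← hc2, h0, coeff_zero])
    · have e1 : (2 : F) * u * c₂ = 0 := by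
        have := hc1; rw [h0, coeff_zero] at this; linear_combination this
      have e0 : u ^ 2 - c₁ ^ 2 * r' = 0 := by rw [← hc0, h0, coeff_zero]
      have e2 : c₁ ^ 2 + c₂ ^ 2 = 0 := by rw [← hc2, h0, coeff_zero]
      rcases mul_eq_zero.mp e1 with h | hcc
      · rcases mul_eq_zero.mp h with h | hu
        · exact h2F h
        · apply h2
          have : c₁ ^ 2 * r' = 0 := by rw [hu] at e0; linear_combination -e0
          rcases mul_eq_zero.mp this with h | h
          · exact absurd ((pow_eq_zero_iff (by norm_num)).mp h) h1
          · exact h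
      · apply h1
        rw [hcc] at e2
        have : c₁ ^ 2 = 0 := by linear_combination e2
        exact pow_eq_zero_iff (by norm_num) |>.mp this
  have hmap : ∀ p ∈ {p : F × F | c₁ * p.1 + c₂ * p.2 = u ∧ p.1 ^ 2 + p.2 ^ 2 = r'},
      Prod.snd p ∈ {t : F | P.IsRoot t} := by
    rintro ⟨p₁, p₂⟩ ⟨hl, hq⟩
    simp only [Set.mem_setOf_eq, IsRoot.def, hP]
    simp only [eval_add, eval_mul, eval_C, eval_pow, eval_X]
    linear_combination (c₁ ^ 2) * hq + (-(c₁ * p₁) + c₂ * p₂ - u) * hl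
  have hinj : Set.InjOn Prod.snd
      {p : F × F | c₁ * p.1 + c₂ * p.2 = u ∧ p.1 ^ 2 + p.2 ^ 2 = r'} := by
    rintro ⟨p₁, p₂⟩ ⟨hl, -⟩ ⟨q₁, q₂⟩ ⟨hl', -⟩ h
    simp only at h
    subst h
    have : c₁ * p₁ = c₁ * q₁ := by linear_combination hl - hl'
    have := mul_left_cancel₀ h1 this
    simp [this]
  have hfin : {t : F | P.IsRoot t}.Finite := P.finite_setOf_isRoot hPne
  calc Set.ncard {p : F × F | c₁ * p.1 + c₂ * p.2 = u ∧ p.1 ^ 2 + p.2 ^ 2 = r'}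
      ≤ Set.ncard {t : F | P.IsRoot t} := Set.ncard_le_ncard_of_injOn _ hmap hinj hfin
    _ ≤ 2 := by
        have hset : {t : F | P.IsRoot t} = ↑P.roots.toFinset := by
          ext t; simp [Polynomial.mem_roots, hPne]
        rw [hset, Set.ncard_coe_finset]
        calc P.roots.toFinset.card ≤ Multiset.card P.roots := P.roots.toFinset_card_le
          _ ≤ P.natDegree := P.card_roots'
          _ ≤ 2 := natDegree_quadratic_le

/-- The intersection of two spheres about distinct centers, at least one of nonzero radius,
has at most `2 q^{d-2}` points. -/
theorem stmt15 (F : Type*) [Field F] [Fintype F] (hF : ringChar F ≠ 2)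
    (d : ℕ) (hd : 2 ≤ d) (a b : Fin d → F) (hab : a ≠ b)
    (r : F) (hr : r ≠ 0) (s : F) :
    Set.ncard {x : Fin d → F | normF (x - a) = r ∧ normF (x - b) = s} ≤
      2 * Fintype.card F ^ (d - 2) := by
  classical
  have h2F : (2 : F) ≠ 0 := Ring.two_ne_zero hF
  set e : Fin d → F := fun k => 2 * (b k - a k) with he
  set u : F := r - s + ∑ k, (b k ^ 2 - a k ^ 2) with hu
  have key : ∀ x : Fin d → F,
      (normF (x - a) = r ∧ normF (x - b) = s) ↔
        ((∑ k, e k * x k = u) ∧ normF (x - a) = r) := by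
    intro x
    have hid : normF (x - a) - normF (x - b)
        = (∑ k, e k * x k) - ∑ k, (b k ^ 2 - a k ^ 2) := by
      simp only [normF, Pi.sub_apply, ← Finset.sum_sub_distrib]
      apply Finset.sum_congr rfl
      intro k _
      simp only [he]
      ring
    constructor
    · rintro ⟨h1, h2⟩
      refine ⟨?_, h1⟩
      rw [h1, h2] at hid
      rw [hu]
      linear_combination -hid
    · rintro ⟨h1, h2⟩
      refine ⟨h2, ?_⟩
      rw [h2] at hid
      rw [hu] at h1
      linear_combination -hid - h1
  have heb : ∃ i, e i ≠ 0 := by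
    obtain ⟨i, hi⟩ := Function.ne_iff.mp hab
    exact ⟨i, mul_ne_zero h2F (sub_ne_zero.mpr (Ne.symm hi))⟩
  have hpair : ∃ i j : Fin d, i ≠ j ∧ e i ≠ 0 ∧
      (e i ^ 2 + e j ^ 2 ≠ 0 ∨ ∀ k, k = i ∨ k = j) := by
    obtain ⟨i, hi⟩ := heb
    have hcard : 1 < Fintype.card (Fin d) := by
      rw [Fintype.card_fin]; omega
    obtain ⟨j₀, hj₀⟩ := Fintype.exists_ne_of_one_lt_card hcard i
    by_cases hA : e i ^ 2 + e j₀ ^ 2 ≠ 0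
    · exact ⟨i, j₀, Ne.symm hj₀, hi, Or.inl hA⟩
    push_neg at hA
    by_cases hB : ∀ k, k = i ∨ k = j₀
    · exact ⟨i, j₀, Ne.symm hj₀, hi, Or.inr hB⟩
    push_neg at hB
    obtain ⟨k, hk⟩ := hB
    by_cases hC : e i ^ 2 + e k ^ 2 ≠ 0
    · exact ⟨i, k, Ne.symm hk.1, hi, Or.inl hC⟩
    push_neg at hC
    refine ⟨j₀, k, Ne.symm hk.2, ?_, Or.inl ?_⟩
    · intro h0
      apply hi
      have h1 : e i ^ 2 = 0 := by rw [h0] at hA; linear_combination hA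
      exact (pow_eq_zero_iff (by norm_num)).mp h1
    · intro h0
      have h1 : (2 : F) * e i ^ 2 = 0 := by linear_combination hA + hC - h0
      rcases mul_eq_zero.mp h1 with h | h
      · exact h2F h
      · exact hi ((pow_eq_zero_iff (by norm_num)).mp h)
  obtain ⟨i, j, hij, hei, hgood⟩ := hpair
  set s₀ : Finset (Fin d → F) :=
    Finset.univ.filter (fun x => (∑ k, e k * x k = u) ∧ normF (x - a) = r) with hs₀
  have hSeq : {x : Fin d → F | normF (x - a) = r ∧ normF (x - b) = s} = ↑s₀ := by
    ext x
    simp only [hs₀, Finset.coe_filter, Set.mem_setOf_eq, Finset.mem_univ, true_and]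
    exact key x
  rw [hSeq, Set.ncard_coe_finset]
  set f : (Fin d → F) → ({k : Fin d // k ≠ i ∧ k ≠ j} → F) := fun x k => x k.1 with hf
  have hsplit : ∀ g : Fin d → F,
      ∑ k, g k = g i + g j + ∑ k ∈ Finset.univ \ {i, j}, g k := by
    intro g
    rw [← Finset.sum_sdiff (Finset.subset_univ ({i, j} : Finset (Fin d))),
      Finset.sum_pair hij]
    ring
  have hfiber : ∀ y ∈ s₀.image f, (s₀.filter (fun x => f x = y)).card ≤ 2 := by
    intro y hy
    obtain ⟨x₀, hx₀s, hx₀y⟩ := Finset.mem_image.mp hy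
    simp only [hs₀, Finset.mem_filter, Finset.mem_univ, true_and] at hx₀s
    obtain ⟨hx₀l, hx₀q⟩ := hx₀s
    have hx₀q' : ∑ k, (x₀ k - a k) ^ 2 = r := by
      simpa [normF] using hx₀q
    set r' : F := (x₀ i - a i) ^ 2 + (x₀ j - a j) ^ 2 with hr'
    have h2 : e i ^ 2 + e j ^ 2 ≠ 0 ∨ r' ≠ 0 := by
      rcases hgood with h | h
      · exact Or.inl h
      · right
        have huniv : (Finset.univ : Finset (Fin d)) = {i, j} := by
          ext k; simpa using h k
        have hr'r : r' = r := by
          rw [← hx₀q', huniv, Finset.sum_pair hij]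
        rw [hr'r]; exact hr
    set u' : F := e i * (x₀ i - a i) + e j * (x₀ j - a j) with hu'
    have hcount := two_var_count (e i) (e j) u' r' h2F hei h2
    rw [← Set.ncard_coe_finset]
    refine le_trans (Set.ncard_le_ncard_of_injOn
      (fun x => (x i - a i, x j - a j)) ?_ ?_ (Set.toFinite _)) hcount
    · intro x hx
      simp only [Finset.mem_coe, Finset.mem_filter, hs₀, Finset.mem_univ, true_and] at hx
      obtain ⟨⟨hxl, hxq⟩, hxy⟩ := hx
      have hxq' : ∑ k, (x k - a k) ^ 2 = r := by simpa [normF] using hxq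
      have hagree : ∀ k : Fin d, k ≠ i → k ≠ j → x k = x₀ k := by
        intro k hki hkj
        exact congrFun (hxy.trans hx₀y.symm) ⟨k, hki, hkj⟩
      constructor
      · have h1 : ∑ k, e k * x k
            = e i * x i + e j * x j + ∑ k ∈ Finset.univ \ {i, j}, e k * x k :=
          hsplit (fun k => e k * x k)
        have h2' : ∑ k, e k * x₀ k
            = e i * x₀ i + e j * x₀ j + ∑ k ∈ Finset.univ \ {i, j}, e k * x₀ k :=
          hsplit (fun k => e k * x₀ k)
        rw [hxl] at h1
        rw [hx₀l] at h2'
        have hrest : ∑ k ∈ Finset.univ \ {i, j}, e k * x k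
            = ∑ k ∈ Finset.univ \ {i, j}, e k * x₀ k := by
          apply Finset.sum_congr rfl
          intro k hk
          simp only [Finset.mem_sdiff, Finset.mem_insert, Finset.mem_singleton] at hk
          rw [hagree k (fun h => hk.2 (Or.inl h)) (fun h => hk.2 (Or.inr h))]
        simp only [hu']
        linear_combination h2' - h1 - hrest
      · have h1 : ∑ k, (x k - a k) ^ 2
            = (x i - a i) ^ 2 + (x j - a j) ^ 2
              + ∑ k ∈ Finset.univ \ {i, j}, (x k - a k) ^ 2 :=
          hsplit (fun k => (x k - a k) ^ 2)
        have h2' : ∑ k, (x₀ k - a k) ^ 2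
            = (x₀ i - a i) ^ 2 + (x₀ j - a j) ^ 2
              + ∑ k ∈ Finset.univ \ {i, j}, (x₀ k - a k) ^ 2 :=
          hsplit (fun k => (x₀ k - a k) ^ 2)
        rw [hxq'] at h1
        rw [hx₀q'] at h2'
        have hrest : ∑ k ∈ Finset.univ \ {i, j}, (x k - a k) ^ 2
            = ∑ k ∈ Finset.univ \ {i, j}, (x₀ k - a k) ^ 2 := by
          apply Finset.sum_congr rfl
          intro k hk
          simp only [Finset.mem_sdiff, Finset.mem_insert, Finset.mem_singleton] at hk
          rw [hagree k (fun h => hk.2 (Or.inl h)) (fun h => hk.2 (Or.inr h))]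
        simp only [hr']
        linear_combination h2' - h1 - hrest
    · intro x hx x' hx' hxx
      simp only [Finset.mem_coe, Finset.mem_filter] at hx hx'
      funext k
      by_cases hki : k = i
      · subst hki
        have := congrArg Prod.fst hxx
        simpa using this
      by_cases hkj : k = j
      · subst hkj
        have := congrArg Prod.snd hxx
        simpa using this
      · exact congrFun (hx.2.trans hx'.2.symm) ⟨k, hki, hkj⟩
  have himg : (s₀.image f).card ≤ Fintype.card F ^ (d - 2) := by
    have hsub : Fintype.card {k : Fin d // k ≠ i ∧ k ≠ j} = d - 2 := by
      rw [Fintype.card_subtype]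
      have hflt : Finset.univ.filter (fun k : Fin d => k ≠ i ∧ k ≠ j)
          = Finset.univ \ {i, j} := by
        ext k; simp [not_or]
      rw [hflt, Finset.card_sdiff_of_subset (Finset.subset_univ _)]
      rw [Finset.card_univ, Fintype.card_fin,
        Finset.card_insert_of_notMem (by simp [hij]), Finset.card_singleton]
    calc (s₀.image f).card ≤ Fintype.card ({k : Fin d // k ≠ i ∧ k ≠ j} → F) :=
          Finset.card_le_univ _
      _ = Fintype.card F ^ (d - 2) := by rw [Fintype.card_fun, hsub]
  calc s₀.card ≤ 2 * (s₀.image f).card := Finset.card_le_mul_card_image s₀ 2 hfiber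
    _ ≤ 2 * Fintype.card F ^ (d - 2) := Nat.mul_le_mul_left 2 himg
end
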